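/- Ordering of wave speeds: for g > 0, h₁, h₂ > 0, 0 ≤ r < 1, the external eigenvalue magnitude exceeds the internal one: √(g h₁(1+α₊)) ≥ √(g h₁(1+α₋)), with equality only if h₂ = 0 or r-degenerate cases; moreover g h₁(1+α₊) ≥ g·max(h₁,h₂) and g h₁(1+α₋) ≤ g·min(h₁,h₂). -/

import Mathlib

/-!
Clearing the factor `h₁`, one gets `h₁ (1 + α±) = (h₁ + h₂ ± h₁ s) / 2` with `s` the square root
in `α±`, and `h₁ s ≥ h₁ |γ - 1| = |h₁ - h₂|` because the discriminant exceeds `(γ - 1)²` by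
`4 r γ ≥ 0`. The two roots therefore straddle `h₁` and `h₂`, since `(a + b ± |a - b|) / 2` is
`max a b`, resp. `min a b`.
-/

lemma max_le_half_add_add_of_abs_sub_le {a b s : ℝ} (h : |a - b| ≤ s) :
    max a b ≤ (a + b + s) / 2 := by
  obtain ⟨h₁, h₂⟩ := abs_sub_le_iff.mp h
  exact max_le (by linarith) (by linarith)

lemma half_add_sub_le_min_of_abs_sub_le {a b s : ℝ} (h : |a - b| ≤ s) :
    (a + b - s) / 2 ≤ min a b := by
  obtain ⟨h₁, h₂⟩ := abs_sub_le_iff.mp h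
  exact le_min (by linarith) (by linarith)

lemma abs_sub_le_mul_sqrt_discrim {h₁ h₂ r : ℝ} (hh₁ : 0 < h₁) (hh₂ : 0 ≤ h₂) (hr : 0 ≤ r) :
    |h₁ - h₂| ≤ h₁ * Real.sqrt ((h₂ / h₁ - 1) ^ 2 + 4 * r * (h₂ / h₁)) := by
  have hγ : 0 ≤ 4 * r * (h₂ / h₁) := by positivity
  calc |h₁ - h₂| = h₁ * |h₂ / h₁ - 1| := by
        rw [abs_sub_comm, ← abs_of_pos hh₁, ← abs_mul, abs_of_pos hh₁, mul_sub,
          mul_div_cancel₀ _ hh₁.ne', mul_one]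
    _ ≤ h₁ * Real.sqrt ((h₂ / h₁ - 1) ^ 2 + 4 * r * (h₂ / h₁)) :=
        mul_le_mul_of_nonneg_left (Real.abs_le_sqrt (le_add_of_nonneg_right hγ)) hh₁.le

lemma mul_one_add_half_div_sub_one_add {h₁ : ℝ} (hh₁ : h₁ ≠ 0) (h₂ t : ℝ) :
    h₁ * (1 + 1 / 2 * (h₂ / h₁ - 1 + t)) = (h₁ + h₂ + h₁ * t) / 2 := by
  field_simp
  ring

theorem stmt_19_general (g h₁ h₂ r : ℝ) (hg : 0 < g) (hh₁ : 0 < h₁) (hh₂ : 0 < h₂)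
    (hr0 : 0 ≤ r) :
    let γ : ℝ := h₂ / h₁
    let αp : ℝ := (1/2) * (γ - 1 + Real.sqrt ((γ-1)^2 + 4*r*γ))
    let αm : ℝ := (1/2) * (γ - 1 - Real.sqrt ((γ-1)^2 + 4*r*γ))
    Real.sqrt (g*h₁*(1 + αp)) ≥ Real.sqrt (g*h₁*(1 + αm)) ∧
    g*h₁*(1 + αp) ≥ g * max h₁ h₂ ∧
    g*h₁*(1 + αm) ≤ g * min h₁ h₂ := by
  intro γ αp αm
  set s := Real.sqrt ((γ - 1) ^ 2 + 4 * r * γ)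
  have hgap : |h₁ - h₂| ≤ h₁ * s := abs_sub_le_mul_sqrt_discrim hh₁ hh₂.le hr0
  have hp : g * h₁ * (1 + αp) = g * ((h₁ + h₂ + h₁ * s) / 2) := by
    simp only [αp, γ]
    linear_combination g * mul_one_add_half_div_sub_one_add hh₁.ne' h₂ s
  have hm : g * h₁ * (1 + αm) = g * ((h₁ + h₂ - h₁ * s) / 2) := by
    simp only [αm, γ]
    linear_combination g * mul_one_add_half_div_sub_one_add hh₁.ne' h₂ (-s)
  have hs : 0 ≤ h₁ * s := (abs_nonneg _).trans hgap
  rw [hp, hm]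
  refine ⟨Real.sqrt_le_sqrt (by gcongr; linarith), ?_, ?_⟩
  · exact mul_le_mul_of_nonneg_left (max_le_half_add_add_of_abs_sub_le hgap) hg.le
  · exact mul_le_mul_of_nonneg_left (half_add_sub_le_min_of_abs_sub_le hgap) hg.le

theorem stmt_19 (g h₁ h₂ r : ℝ) (hg : 0 < g) (hh₁ : 0 < h₁) (hh₂ : 0 < h₂)
    (hr0 : 0 ≤ r) (hr1 : r < 1) :
    let γ : ℝ := h₂ / h₁
    let αp : ℝ := (1/2) * (γ - 1 + Real.sqrt ((γ-1)^2 + 4*r*γ))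
    let αm : ℝ := (1/2) * (γ - 1 - Real.sqrt ((γ-1)^2 + 4*r*γ))
    Real.sqrt (g*h₁*(1 + αp)) ≥ Real.sqrt (g*h₁*(1 + αm)) ∧
    g*h₁*(1 + αp) ≥ g * max h₁ h₂ ∧
    g*h₁*(1 + αm) ≤ g * min h₁ h₂ :=
  stmt_19_general g h₁ h₂ r hg hh₁ hh₂ hr0
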